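/- With A*_s the multivariate dyadic block kernel (tensor product of one-dimensional kernels ℐ_{s_j}), the sup-norm of the sum over the layer ‖s‖₁ = n+1 satisfies ‖Σ_{‖s‖₁=n+1} A*_s‖_{L_∞(ℝ^d)} ≍ 2^n·n^{d−1}, with implicit constants depending only on d. -/

import Mathlib

/-!
The trapezoid `k_m` equals `2 Λ(·/2^m) - Λ(·/2^(m-1))` for the tent `Λ`, so its mass is
`3·2^(m-1)` (and `1` for `m = 0`). As `|K_m| ≤ ∫ k_m = K_m(0)`, every block kernel obeys
`|ℐ_s| ≤ 3·2^s` and `ℐ_s(0) ≥ 2^s/4`; hence each of the terms of the layer `‖s‖₁ = n+1` is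
bounded by `3^d 2^(n+1)`, and at `x = 0` they are all real and at least `2^(n+1)/4^d`. The layer
has `binom(n+d, d-1) ≍ n^(d-1)` elements, and the essential supremum of a continuous function
dominates each of its values.
-/

open MeasureTheory

/-- The multiplier `k_m`: the Fejér multiplier for `m = 0`, trapezoidal for `m ≥ 1`. -/
noncomputable def multiplier (m : ℕ) (l : ℝ) : ℝ :=
  if m = 0 then (if |l| ≤ 1 then 1 - |l| else 0)
  else if |l| < 2 ^ (m - 1) then 1
  else if |l| ≤ 2 ^ m then 2 * (1 - |l| / 2 ^ m)
  else 0

/-- The kernel `K_m(t) = ∫ k_m(λ) e^{-2πiλt} dλ`. -/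
noncomputable def kernelK (m : ℕ) (t : ℝ) : ℂ :=
  ∫ l : ℝ, (multiplier m l : ℂ) * Complex.exp (-2 * Real.pi * Complex.I * l * t)

/-- The one-dimensional dyadic block kernel `ℐ_s = K_s - K_{s-1}` (with `K_{-1} ≡ 0`). -/
noncomputable def blockKernel (s : ℕ) (t : ℝ) : ℂ :=
  kernelK s t - if s = 0 then 0 else kernelK (s - 1) t

open Finset
open scoped FourierTransform Nat

noncomputable def tent (u : ℝ) : ℝ := max 0 (1 - |u|)

theorem continuous_tent : Continuous tent := by
  unfold tent; fun_prop

theorem hasCompactSupport_tent : HasCompactSupport tent := by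
  refine HasCompactSupport.intro (isCompact_Icc (a := -1) (b := 1)) fun u hu => ?_
  have : 1 < |u| := not_le.1 fun h => hu (abs_le.1 h)
  exact max_eq_left (by linarith)

theorem integrable_tent : Integrable tent :=
  continuous_tent.integrable_of_hasCompactSupport hasCompactSupport_tent

theorem integral_tent : ∫ u, tent u = 1 := by
  rw [show (fun u => tent u) = fun u => max 0 (1 - |u|) from rfl,
    integral_comp_abs (f := fun u => max 0 (1 - u)),
    setIntegral_eq_of_subset_of_forall_sdiff_eq_zero measurableSet_Ioi Set.Ioc_subset_Ioi_self
      (fun u hu => ?_), ← intervalIntegral.integral_of_le zero_le_one,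
    intervalIntegral.integral_congr (g := fun u => 1 - u) (fun u hu => ?_)]
  · rw [intervalIntegral.integral_sub intervalIntegrable_const
      intervalIntegral.intervalIntegrable_id]
    norm_num
  · rw [Set.uIcc_of_le zero_le_one] at hu
    exact max_eq_right (by linarith [hu.2])
  · have : 1 < u := not_le.1 fun h => hu.2 ⟨hu.1, h⟩
    exact max_eq_left (by linarith)

theorem integral_tent_div {a : ℝ} (ha : 0 < a) : ∫ l, tent (l / a) = a := by
  rw [Measure.integral_comp_div, integral_tent, smul_eq_mul, mul_one, abs_of_pos ha]

theorem multiplier_zero_eq_tent : multiplier 0 = tent := by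
  ext l
  simp only [multiplier, tent, if_true]
  split_ifs with h
  · exact (max_eq_right (by linarith)).symm
  · exact (max_eq_left (by linarith)).symm

theorem multiplier_eq_tent {m : ℕ} (hm : m ≠ 0) (l : ℝ) :
    multiplier m l = 2 * tent (l / 2 ^ m) - tent (l / 2 ^ (m - 1)) := by
  obtain ⟨k, rfl⟩ : ∃ k, m = k + 1 := ⟨m - 1, by omega⟩
  have hk : (0 : ℝ) < 2 ^ k := by positivity
  simp only [multiplier, tent, hm, if_false, Nat.add_sub_cancel, abs_div, abs_mul, abs_pow, abs_two,
    pow_succ]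
  rw [← div_div]
  have hv : 0 ≤ |l| / 2 ^ k := by positivity
  split_ifs with h₁ h₂
  · have : |l| / 2 ^ k < 1 := (div_lt_one hk).2 h₁
    rw [max_eq_right (by linarith), max_eq_right (by linarith)]; ring
  · have : 1 ≤ |l| / 2 ^ k := (one_le_div hk).2 (not_lt.1 h₁)
    have : |l| / 2 ^ k ≤ 2 := (div_le_iff₀ hk).2 (by linarith)
    rw [max_eq_right (by linarith), max_eq_left (by linarith)]; ring
  · have : 2 < |l| / 2 ^ k := (lt_div_iff₀ hk).2 (by linarith)
    rw [max_eq_left (by linarith), max_eq_left (by linarith)]; ring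

theorem multiplier_nonneg (m : ℕ) (l : ℝ) : 0 ≤ multiplier m l := by
  unfold multiplier
  split_ifs with _ _ _ h
  · linarith
  · rfl
  · norm_num
  · have : |l| / 2 ^ m ≤ 1 := (div_le_one (by positivity)).2 h
    linarith
  · rfl

theorem integrable_multiplier (m : ℕ) : Integrable (multiplier m) := by
  rcases eq_or_ne m 0 with rfl | hm
  · exact multiplier_zero_eq_tent ▸ integrable_tent
  · rw [funext (multiplier_eq_tent hm)]
    exact ((integrable_tent.comp_div (by positivity)).const_mul 2).sub
      (integrable_tent.comp_div (by positivity))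

theorem integral_multiplier_zero : ∫ l, multiplier 0 l = 1 := by
  rw [multiplier_zero_eq_tent, integral_tent]

theorem integral_multiplier {m : ℕ} (hm : m ≠ 0) : ∫ l, multiplier m l = 3 * 2 ^ (m - 1) := by
  obtain ⟨k, rfl⟩ : ∃ k, m = k + 1 := ⟨m - 1, by omega⟩
  simp_rw [multiplier_eq_tent hm]
  rw [integral_sub ((integrable_tent.comp_div (by positivity)).const_mul 2)
      (integrable_tent.comp_div (by positivity)), integral_const_mul,
    integral_tent_div (by positivity), integral_tent_div (by positivity), Nat.add_sub_cancel,
    pow_succ]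
  ring

theorem integral_multiplier_le (m : ℕ) : ∫ l, multiplier m l ≤ 3 / 2 * 2 ^ m := by
  rcases m with _ | k
  · rw [integral_multiplier_zero]; norm_num
  · rw [integral_multiplier k.add_one_ne_zero, Nat.add_sub_cancel, pow_succ]
    linarith

theorem kernelK_eq_fourier (m : ℕ) : kernelK m = 𝓕 (fun l => (multiplier m l : ℂ)) := by
  ext t
  rw [kernelK, Real.fourier_real_eq_integral_exp_smul]
  congr 1 with l
  rw [smul_eq_mul, mul_comm]
  congr 2
  push_cast
  ring

theorem continuous_kernelK (m : ℕ) : Continuous (kernelK m) := by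
  rw [kernelK_eq_fourier]
  exact VectorFourier.fourierIntegral_continuous Real.continuous_fourierChar
    continuous_inner (integrable_multiplier m).ofReal

theorem norm_kernelK_le (m : ℕ) (t : ℝ) : ‖kernelK m t‖ ≤ ∫ l, multiplier m l := by
  rw [kernelK_eq_fourier]
  refine (VectorFourier.norm_fourierIntegral_le_integral_norm 𝐞 volume (innerₗ ℝ) _ t).trans_eq ?_
  simp_rw [Complex.norm_real, Real.norm_of_nonneg (multiplier_nonneg m _)]

theorem kernelK_zero (m : ℕ) : kernelK m 0 = ∫ l, multiplier m l := by
  simp [kernelK, integral_complex_ofReal]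

noncomputable def blockMass (s : ℕ) : ℝ :=
  (∫ l, multiplier s l) - if s = 0 then 0 else ∫ l, multiplier (s - 1) l

theorem blockKernel_zero (s : ℕ) : blockKernel s 0 = blockMass s := by
  rw [blockKernel, blockMass]
  split_ifs <;> simp [kernelK_zero]

theorem pow_div_four_le_blockMass (s : ℕ) : 2 ^ s / 4 ≤ blockMass s := by
  rcases eq_or_ne s 0 with rfl | hs
  · norm_num [blockMass, integral_multiplier_zero]
  · have := integral_multiplier_le (s - 1)
    rw [blockMass, if_neg hs, integral_multiplier hs]
    obtain ⟨k, rfl⟩ : ∃ k, s = k + 1 := ⟨s - 1, by omega⟩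
    rw [Nat.add_sub_cancel, pow_succ] at *
    linarith [pow_pos (two_pos (α := ℝ)) k]

theorem continuous_blockKernel (s : ℕ) : Continuous (blockKernel s) := by
  unfold blockKernel
  split_ifs
  · simpa using continuous_kernelK s
  · exact (continuous_kernelK s).sub (continuous_kernelK (s - 1))

theorem norm_blockKernel_le (s : ℕ) (t : ℝ) : ‖blockKernel s t‖ ≤ 3 * 2 ^ s := by
  have hs := (norm_kernelK_le s t).trans (integral_multiplier_le s)
  rw [blockKernel]
  split_ifs with h
  · rw [sub_zero]; linarith [pow_pos (two_pos (α := ℝ)) s]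
  · obtain ⟨k, rfl⟩ : ∃ k, s = k + 1 := ⟨s - 1, by omega⟩
    have hk := (norm_kernelK_le k t).trans (integral_multiplier_le k)
    rw [Nat.add_sub_cancel, pow_succ] at *
    linarith [norm_sub_le (kernelK (k + 1) t) (kernelK k t), pow_pos (two_pos (α := ℝ)) k]

section Products

variable {ι : Type*} [Fintype ι]

theorem norm_prod_blockKernel_le (s : ι → ℕ) (x : ι → ℝ) :
    ‖∏ j, blockKernel (s j) (x j)‖ ≤ 3 ^ Fintype.card ι * 2 ^ ∑ j, s j := by
  rw [norm_prod, ← Finset.card_univ, ← prod_const, ← prod_pow_eq_pow_sum, ← prod_mul_distrib]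
  exact prod_le_prod (fun _ _ => norm_nonneg _) fun j _ => norm_blockKernel_le (s j) (x j)

theorem pow_div_le_prod_blockMass (s : ι → ℕ) :
    2 ^ (∑ j, s j) / 4 ^ Fintype.card ι ≤ ∏ j, blockMass (s j) := by
  rw [← Finset.card_univ, ← prod_const, ← prod_pow_eq_pow_sum, ← prod_div_distrib]
  exact prod_le_prod (fun _ _ => by positivity) fun j _ => pow_div_four_le_blockMass (s j)

end Products

/-- `∑_{‖s‖₁ = N} A*_s`. -/
noncomputable def layerKernel (d N : ℕ) (x : Fin d → ℝ) : ℂ :=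
  ∑ s ∈ Nat.antidiagonalTuple d N, ∏ j, blockKernel (s j) (x j)

theorem continuous_layerKernel (d N : ℕ) : Continuous (layerKernel d N) :=
  continuous_finsetSum _ fun s _ => continuous_finsetProd _ fun j _ =>
    (continuous_blockKernel (s j)).comp (continuous_apply j)

theorem norm_layerKernel_le (d N : ℕ) (x : Fin d → ℝ) :
    ‖layerKernel d N x‖ ≤ #(Nat.antidiagonalTuple d N) * (3 ^ d * 2 ^ N) := by
  refine (norm_sum_le _ _).trans ?_
  rw [← nsmul_eq_mul]
  refine sum_le_card_nsmul _ _ _ fun s hs => ?_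
  simpa [Nat.mem_antidiagonalTuple.1 hs] using norm_prod_blockKernel_le s x

theorem le_norm_layerKernel_zero (d N : ℕ) :
    #(Nat.antidiagonalTuple d N) * (2 ^ N / 4 ^ d) ≤ ‖layerKernel d N 0‖ := by
  have hzero : layerKernel d N 0 =
      ((∑ s ∈ Nat.antidiagonalTuple d N, ∏ j, blockMass (s j) : ℝ) : ℂ) := by
    simp [layerKernel, blockKernel_zero]
  rw [hzero, Complex.norm_real, ← nsmul_eq_mul]
  refine (card_nsmul_le_sum _ _ _ fun s hs => ?_).trans (le_abs_self _)
  simpa [Nat.mem_antidiagonalTuple.1 hs] using pow_div_le_prod_blockMass s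

theorem card_antidiagonalTuple (k n : ℕ) :
    #(Nat.antidiagonalTuple k n) = (k + n - 1).choose n := by
  have h := card_finsuppAntidiag_nat_eq_choose (s := (univ : Finset (Fin k))) n
  rw [card_univ, Fintype.card_fin] at h
  rw [← h, ← piAntidiag_univ_fin_eq_antidiagonalTuple]
  simp [finsuppAntidiag]

theorem pow_div_factorial_le_card_antidiagonalTuple (D n : ℕ) :
    (n : ℝ) ^ D / D ! ≤ #(Nat.antidiagonalTuple (D + 1) (n + 1)) := by
  rw [card_antidiagonalTuple, show D + 1 + (n + 1) - 1 = n + 1 + D by omega, Nat.choose_symm_add]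
  refine le_trans ?_ (Nat.pow_le_choose D _)
  rw [show n + 1 + D + 1 - D = n + 2 by omega]
  gcongr
  linarith

theorem card_antidiagonalTuple_le_mul_pow (D n : ℕ) (hn : 1 ≤ n) :
    (#(Nat.antidiagonalTuple (D + 1) (n + 1)) : ℝ) ≤ (D + 2) ^ D * n ^ D := by
  rw [card_antidiagonalTuple, show D + 1 + (n + 1) - 1 = n + 1 + D by omega, Nat.choose_symm_add,
    ← mul_pow]
  refine (Nat.cast_le.2 (Nat.choose_le_pow _ _)).trans ?_
  push_cast
  gcongr
  have : (1 : ℝ) ≤ n := by exact_mod_cast hn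
  nlinarith

theorem Continuous.enorm_le_eLpNormEssSup {X E : Type*} [TopologicalSpace X] [MeasurableSpace X]
    [TopologicalSpace E] [ContinuousENorm E] {μ : Measure X} [μ.IsOpenPosMeasure] {f : X → E}
    (hf : Continuous f) (x : X) : ‖f x‖ₑ ≤ eLpNormEssSup f μ := by
  have hclosed : IsClosed {y | ‖f y‖ₑ ≤ eLpNormEssSup f μ} := isClosed_le hf.enorm continuous_const
  have h := (Measure.dense_of_ae (μ := μ) (ae_le_eLpNormEssSup (f := f))).closure_eq
  rw [hclosed.closure_eq] at h
  exact Set.eq_univ_iff_forall.1 h x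

theorem stmt_10 (d : ℕ) (hd : 1 ≤ d) :
    ∃ C₁ C₂ : ℝ, 0 < C₁ ∧ 0 < C₂ ∧ ∀ n : ℕ, 1 ≤ n →
      ENNReal.ofReal (C₁ * 2 ^ n * (n : ℝ) ^ (d - 1)) ≤
        eLpNorm (fun x : Fin d → ℝ =>
          ∑ s ∈ Finset.Nat.antidiagonalTuple d (n + 1),
            ∏ j, blockKernel (s j) (x j)) ⊤ volume ∧
      eLpNorm (fun x : Fin d → ℝ =>
          ∑ s ∈ Finset.Nat.antidiagonalTuple d (n + 1),
            ∏ j, blockKernel (s j) (x j)) ⊤ volume ≤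
        ENNReal.ofReal (C₂ * 2 ^ n * (n : ℝ) ^ (d - 1)) := by
  obtain ⟨D, rfl⟩ : ∃ D, d = D + 1 := ⟨d - 1, by omega⟩
  refine ⟨2 / (4 ^ (D + 1) * D !), 2 * 3 ^ (D + 1) * (D + 2) ^ D, by positivity, by positivity,
    fun n hn => ?_⟩
  rw [Nat.add_sub_cancel, eLpNorm_exponent_top]
  change _ ≤ eLpNormEssSup (layerKernel (D + 1) (n + 1)) volume ∧
    eLpNormEssSup (layerKernel (D + 1) (n + 1)) volume ≤ _
  have hcard := pow_div_factorial_le_card_antidiagonalTuple D n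
  have hcard' := card_antidiagonalTuple_le_mul_pow D n hn
  constructor
  · calc ENNReal.ofReal (2 / (4 ^ (D + 1) * D !) * 2 ^ n * n ^ D)
        ≤ ENNReal.ofReal ‖layerKernel (D + 1) (n + 1) 0‖ := by
          refine ENNReal.ofReal_le_ofReal (le_trans ?_ (le_norm_layerKernel_zero _ _))
          calc 2 / (4 ^ (D + 1) * D !) * 2 ^ n * n ^ D
              = (n : ℝ) ^ D / D ! * (2 ^ (n + 1) / 4 ^ (D + 1)) := by ring
            _ ≤ _ := by gcongr
      _ = ‖layerKernel (D + 1) (n + 1) 0‖ₑ := ofReal_norm _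
      _ ≤ _ := (continuous_layerKernel _ _).enorm_le_eLpNormEssSup 0
  · refine eLpNormEssSup_le_of_ae_bound (ae_of_all _ fun x => ?_)
    calc ‖layerKernel (D + 1) (n + 1) x‖
        ≤ #(Nat.antidiagonalTuple (D + 1) (n + 1)) * (3 ^ (D + 1) * 2 ^ (n + 1)) :=
          norm_layerKernel_le _ _ x
      _ ≤ (D + 2) ^ D * n ^ D * (3 ^ (D + 1) * 2 ^ (n + 1)) := by gcongr
      _ = 2 * 3 ^ (D + 1) * (D + 2) ^ D * 2 ^ n * n ^ D := by ring
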